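/- arXiv:2509.03190 — 5 statements merged into one kernel-verified Lean document; each statement's English description precedes it below -/
import Mathlib

section
/- If T is nonempty, then G has a pair of comparable vertices; more precisely, any vertex t with N(t) ⊆ Z has its neighborhood contained in the neighborhood of v₁, where Z is complete to C. -/
open SimpleGraph

/-- A proper coloring of `G` with colors in `Fin ℓ`. -/
def IsProperColoring {V : Type*} (G : SimpleGraph V) (ℓ : ℕ) (f : V → Fin ℓ) : Prop :=
  ∀ ⦃a b : V⦄, G.Adj a b → f a ≠ f b

/-- A walk in the reconfiguration graph `R_ℓ(G)`: a sequence `c 0, c 1, …, c m` of proper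
`ℓ`-colorings of `G` in which consecutive colorings differ on at most one vertex. -/
def IsRecolorSeq {V : Type*} (G : SimpleGraph V) (ℓ m : ℕ) (c : ℕ → V → Fin ℓ) : Prop :=
  (∀ i ≤ m, IsProperColoring G ℓ (c i)) ∧
    ∀ i < m, ∀ a b : V, a ≠ b → c i a ≠ c (i + 1) a → c i b = c (i + 1) b

/-- The number of times the vertex `a` is recolored along the sequence `c 0, …, c m`. -/
def recolorCount {V : Type*} {ℓ : ℕ} (m : ℕ) (c : ℕ → V → Fin ℓ) (a : V) : ℕ :=
  ((Finset.range m).filter fun i => c i a ≠ c (i + 1) a).card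

/-- The cycle `Cₙ` on `Fin n` (for `n ≥ 3`). -/
def cyc (n : ℕ) [NeZero n] : SimpleGraph (Fin n) := SimpleGraph.fromRel fun a b => a + 1 = b

/-- The graph `P₂ + P₃`, the disjoint union of an edge and a path on three vertices. -/
def p2p3 : SimpleGraph (Fin 5) := SimpleGraph.fromRel fun a b =>
  (a = 0 ∧ b = 1) ∨ (a = 2 ∧ b = 3) ∨ (a = 3 ∧ b = 4)

/-!
Let `t` have no neighbour on the induced 5-cycle `C` and let `x` be a neighbour of `t`. The set
`S` of indices of the neighbours of `x` on `C` meets every three consecutive positions (otherwise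
`tx` plus that `P₃` is a `P₂ + P₃`), contains the middle of any two positions at distance two
(otherwise a `C₄`), and together with any position `k` contains `k + 2` or `k + 3` (otherwise the
edge `v (k+2) v (k+3)` plus the path `t x v k` is a `P₂ + P₃`). The only such subset of `ℤ/5` is
everything, so `x` is adjacent to `v 0`; hence `t` and `v 0` are comparable.
-/

theorem cyc_adj_iff {n : ℕ} [NeZero n] {a b : Fin n} :
    (cyc n).Adj a b ↔ a ≠ b ∧ (a + 1 = b ∨ b + 1 = a) :=
  fromRel_adj _ _ _

theorem Fin.eq_univ_of_meets_three_consecutive (S : Finset (Fin 5))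
    (hmeet : ∀ k, k ∈ S ∨ k + 1 ∈ S ∨ k + 2 ∈ S)
    (hbetween : ∀ k, k ∈ S → k + 2 ∈ S → k + 1 ∈ S)
    (hopposite : ∀ k, k ∈ S → k + 2 ∈ S ∨ k + 3 ∈ S) : S = Finset.univ := by
  revert S; decide

namespace SimpleGraph
variable {V : Type*} {G : SimpleGraph V}

theorem nonempty_p2p3_embedding {a b c d e : V} (hab : G.Adj a b) (hcd : G.Adj c d)
    (hde : G.Adj d e) (hce : ¬ G.Adj c e) (hac : ¬ G.Adj a c) (had : ¬ G.Adj a d)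
    (hae : ¬ G.Adj a e) (hbc : ¬ G.Adj b c) (hbd : ¬ G.Adj b d) (hbe : ¬ G.Adj b e)
    (nce : c ≠ e) : Nonempty (p2p3 ↪g G) := by
  have := hab.ne; have := hcd.ne; have := hde.ne
  have : a ≠ c := by rintro rfl; exact had hcd
  have : a ≠ d := by rintro rfl; exact hac hcd.symm
  have : a ≠ e := by rintro rfl; exact had hde.symm
  have : b ≠ c := by rintro rfl; exact hbd hcd
  have : b ≠ d := by rintro rfl; exact hbc hcd.symm
  have : b ≠ e := by rintro rfl; exact hbd hde.symm
  refine ⟨⟨⟨![a, b, c, d, e], ?_⟩, ?_⟩⟩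
  · intro i j hij
    fin_cases i <;> fin_cases j <;> simp_all
  · intro i j
    change G.Adj (![a, b, c, d, e] i) (![a, b, c, d, e] j) ↔ _
    fin_cases i <;> fin_cases j <;> simp_all [p2p3, fromRel_adj, G.adj_comm]

theorem nonempty_cyc4_embedding {a b c d : V} (hab : G.Adj a b) (hbc : G.Adj b c)
    (hcd : G.Adj c d) (hda : G.Adj d a) (hac : ¬ G.Adj a c) (hbd : ¬ G.Adj b d)
    (nac : a ≠ c) (nbd : b ≠ d) : Nonempty (cyc 4 ↪g G) := by
  have := hab.ne; have := hbc.ne; have := hcd.ne; have := hda.ne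
  refine ⟨⟨⟨![a, b, c, d], ?_⟩, ?_⟩⟩
  · intro i j hij
    fin_cases i <;> fin_cases j <;> simp_all
  · intro i j
    change G.Adj (![a, b, c, d] i) (![a, b, c, d] j) ↔ _
    fin_cases i <;> fin_cases j <;> simp_all [cyc, fromRel_adj, G.adj_comm]

section InducedFiveCycle
variable {v : Fin 5 → V} (hC : ∀ i j, G.Adj (v i) (v j) ↔ (cyc 5).Adj i j)
include hC

theorem adj_cycle_iff {i j : Fin 5} : G.Adj (v i) (v j) ↔ j = i + 1 ∨ i = j + 1 := by
  rw [hC, cyc_adj_iff]; revert i j; decide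

theorem ne_cycle_of_forall_not_adj {t : V} (ht : ∀ i, ¬ G.Adj t (v i)) (i : Fin 5) :
    t ≠ v i := by
  rintro rfl; exact ht (i + 1) ((adj_cycle_iff hC).2 (.inl rfl))

theorem adj_cycle_succ_of_adj_of_adj_add_two (hC4 : ¬ Nonempty (cyc 4 ↪g G))
    (hv : Function.Injective v) {x : V} {k : Fin 5} (hx : x ≠ v (k + 1))
    (h₀ : G.Adj x (v k)) (h₂ : G.Adj x (v (k + 2))) : G.Adj x (v (k + 1)) := by
  by_contra h₁
  exact hC4 (nonempty_cyc4_embedding h₀ ((adj_cycle_iff hC).2 (by grind))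
    ((adj_cycle_iff hC).2 (by grind)) h₂.symm h₁ ((adj_cycle_iff hC).not.2 (by grind)) hx
    (hv.ne (by grind)))

variable {t x : V} (ht : ∀ i, ¬ G.Adj t (v i)) (htx : G.Adj t x)
include ht htx

theorem adj_cycle_or_succ_or_add_two_of_forall_not_adj (hP : ¬ Nonempty (p2p3 ↪g G))
    (hv : Function.Injective v) (k : Fin 5) :
    G.Adj x (v k) ∨ G.Adj x (v (k + 1)) ∨ G.Adj x (v (k + 2)) := by
  by_contra! h
  exact hP (nonempty_p2p3_embedding htx ((adj_cycle_iff hC).2 (by grind))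
    ((adj_cycle_iff hC).2 (by grind)) ((adj_cycle_iff hC).not.2 (by grind)) (ht _) (ht _) (ht _)
    h.1 h.2.1 h.2.2 (hv.ne (by grind)))

theorem adj_cycle_add_two_or_add_three_of_adj (hP : ¬ Nonempty (p2p3 ↪g G)) {k : Fin 5}
    (hk : G.Adj x (v k)) : G.Adj x (v (k + 2)) ∨ G.Adj x (v (k + 3)) := by
  by_contra! h
  exact hP (nonempty_p2p3_embedding ((adj_cycle_iff hC).2 (by grind)) htx hk (ht k)
    (fun h' => ht _ h'.symm) (fun h' => h.1 h'.symm) ((adj_cycle_iff hC).not.2 (by grind))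
    (fun h' => ht _ h'.symm) (fun h' => h.2 h'.symm) ((adj_cycle_iff hC).not.2 (by grind))
    (ne_cycle_of_forall_not_adj hC ht k))

theorem adj_cycle_of_adj_of_forall_not_adj (hP : ¬ Nonempty (p2p3 ↪g G))
    (hC4 : ¬ Nonempty (cyc 4 ↪g G)) (hv : Function.Injective v) (j : Fin 5) :
    G.Adj x (v j) := by
  classical
  have hx : ∀ i, x ≠ v i := by rintro i rfl; exact ht i htx
  have hS := Fin.eq_univ_of_meets_three_consecutive ({k | G.Adj x (v k)} : Finset (Fin 5))
    (by simpa using adj_cycle_or_succ_or_add_two_of_forall_not_adj hC ht htx hP hv)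
    (by simpa using fun k => adj_cycle_succ_of_adj_of_adj_add_two hC hC4 hv (hx (k + 1)))
    (by simpa using fun k => adj_cycle_add_two_or_add_three_of_adj hC ht htx hP (k := k))
  simpa using Finset.eq_univ_iff_forall.1 hS j

end InducedFiveCycle

end SimpleGraph

/-- in a `(P₂+P₃, C₄)`-free graph with an induced 5-cycle `v 0 … v 4`,
if the set `T` of vertices outside the cycle with no neighbor on it is nonempty, then `G`
has a pair of comparable vertices; more precisely, any vertex `t` outside the cycle with no
neighbor on the cycle and with all its neighbors in `Z` (the vertices adjacent to all of the
cycle) has its neighborhood contained in that of `v 0`. -/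
theorem stmt0 {V : Type*} (G : SimpleGraph V)
    (hP : ¬ Nonempty (p2p3 ↪g G)) (hC4 : ¬ Nonempty (cyc 4 ↪g G))
    (v : Fin 5 → V) (hv : Function.Injective v)
    (hC : ∀ i j, G.Adj (v i) (v j) ↔ (cyc 5).Adj i j) :
    ((∃ t, (∀ i, t ≠ v i) ∧ ∀ i, ¬ G.Adj t (v i)) →
      ∃ x y : V, x ≠ y ∧ ¬ G.Adj x y ∧
        ((∀ w, G.Adj x w → G.Adj y w) ∨ ∀ w, G.Adj y w → G.Adj x w)) ∧
    (∀ t, (∀ i, t ≠ v i) → (∀ i, ¬ G.Adj t (v i)) →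
      (∀ x, G.Adj t x → ((∀ i, x ≠ v i) ∧ ∀ i, G.Adj x (v i))) →
      ∀ x, G.Adj t x → G.Adj (v 0) x) := by
  refine ⟨fun ⟨t, ht₁, ht⟩ => ?_, fun t _ _ hZ x hx => ((hZ x hx).2 0).symm⟩
  exact ⟨t, v 0, ht₁ 0, ht 0, .inl fun w htw =>
    (adj_cycle_of_adj_of_forall_not_adj hC ht htw hP hC4 hv 0).symm⟩
end

section
/- In a (P₂+P₃, C₄)-free graph G containing an induced 5-cycle C = v₁v₂v₃v₄v₅, the set Z of vertices outside C adjacent to all of C is a clique, and Z is complete to C and to D, where D is the set of vertices outside C with exactly three consecutive neighbors on C. -/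
open SimpleGraph

/-- Membership in `Z`: a vertex outside the 5-cycle adjacent to all of it. -/
def inZ5 {V : Type*} (G : SimpleGraph V) (v : Fin 5 → V) (z : V) : Prop :=
  (∀ i, z ≠ v i) ∧ ∀ i, G.Adj z (v i)

/-- Membership in `D`: a vertex outside the 5-cycle whose neighbors on the cycle are
exactly three consecutive vertices `v (i-1), v i, v (i+1)`. -/
def inD5 {V : Type*} (G : SimpleGraph V) (v : Fin 5 → V) (d : V) : Prop :=
  (∀ i, d ≠ v i) ∧ ∃ i : Fin 5, ∀ j, G.Adj d (v j) ↔ (j = i - 1 ∨ j = i ∨ j = i + 1)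

/-! In a `C₄`-free graph, two distinct common neighbours of a non-adjacent pair are adjacent.
Two vertices of `Z`, or a vertex of `Z` and a vertex of `D` seeing `v (i-1), v i, v (i+1)`, are
common neighbours of the non-adjacent pair `v (i-1), v (i+1)`; in the second case they are distinct
because only the vertex of `Z` sees `v (i+2)`. -/

instance {n : ℕ} [NeZero n] : DecidableRel (cyc n).Adj := fun a b =>
  decidable_of_iff (a ≠ b ∧ (a + 1 = b ∨ b + 1 = a)) (by rw [cyc, fromRel_adj])

theorem adj_of_cyc_four_free {V : Type*} {G : SimpleGraph V} (hC4 : ¬ Nonempty (cyc 4 ↪g G))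
    {x y a b : V} (hxy : x ≠ y) (hnxy : ¬ G.Adj x y)
    (hax : G.Adj a x) (hay : G.Adj a y) (hbx : G.Adj b x) (hby : G.Adj b y) (hab : a ≠ b) :
    G.Adj a b := by
  by_contra hnab
  have hf : Function.Injective ![a, x, b, y] := by
    intro i j h
    fin_cases i <;> fin_cases j <;> simp_all [eq_comm]
  refine hC4 ⟨⟨⟨_, hf⟩, fun {i j} => ?_⟩⟩
  fin_cases i <;> fin_cases j <;>
    simp [hax, hay, hbx, hby, hax.symm, hay.symm, hbx.symm, hby.symm, hnab, hnxy, G.adj_comm b a,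
      G.adj_comm y x] <;> decide

theorem inD5.exists_neighbors {V : Type*} {G : SimpleGraph V} {v : Fin 5 → V} {d : V}
    (hd : inD5 G v d) :
    ∃ i : Fin 5, G.Adj d (v (i - 1)) ∧ G.Adj d (v (i + 1)) ∧ ¬ G.Adj d (v (i + 2)) := by
  have hfar : ∀ i : Fin 5, ¬ (i + 2 = i - 1 ∨ i + 2 = i ∨ i + 2 = i + 1) := by decide
  obtain ⟨-, i, hi⟩ := hd
  exact ⟨i, (hi _).2 (.inl rfl), (hi _).2 (.inr (.inr rfl)), (hi _).not.2 (hfar i)⟩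

theorem stmt1_general {V : Type*} (G : SimpleGraph V)
    (hC4 : ¬ Nonempty (cyc 4 ↪g G))
    (v : Fin 5 → V) (hv : Function.Injective v)
    (hC : ∀ i j, G.Adj (v i) (v j) ↔ (cyc 5).Adj i j) :
    (∀ z₁ z₂, inZ5 G v z₁ → inZ5 G v z₂ → z₁ ≠ z₂ → G.Adj z₁ z₂) ∧
    (∀ z, inZ5 G v z → ∀ i, G.Adj z (v i)) ∧
    (∀ z d, inZ5 G v z → inD5 G v d → G.Adj z d) := by
  have hgap (i : Fin 5) : v (i - 1) ≠ v (i + 1) ∧ ¬ G.Adj (v (i - 1)) (v (i + 1)) := by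
    rw [hv.ne_iff, hC]
    revert i
    decide
  refine ⟨fun z₁ z₂ hz₁ hz₂ hne => ?_, fun z hz => hz.2, fun z d hz hd => ?_⟩
  · exact adj_of_cyc_four_free hC4 (hgap 1).1 (hgap 1).2
      (hz₁.2 _) (hz₁.2 _) (hz₂.2 _) (hz₂.2 _) hne
  · obtain ⟨i, hd₁, hd₂, hd₃⟩ := hd.exists_neighbors
    have hzd : z ≠ d := by
      rintro rfl
      exact hd₃ (hz.2 _)
    exact adj_of_cyc_four_free hC4 (hgap i).1 (hgap i).2
      (hz.2 _) (hz.2 _) hd₁ hd₂ hzd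

/-- in a `(P₂+P₃, C₄)`-free graph with an induced 5-cycle, `Z` is a clique,
`Z` is complete to the cycle, and `Z` is complete to `D`. -/
theorem stmt1 {V : Type*} (G : SimpleGraph V)
    (hP : ¬ Nonempty (p2p3 ↪g G)) (hC4 : ¬ Nonempty (cyc 4 ↪g G))
    (v : Fin 5 → V) (hv : Function.Injective v)
    (hC : ∀ i j, G.Adj (v i) (v j) ↔ (cyc 5).Adj i j) :
    (∀ z₁ z₂, inZ5 G v z₁ → inZ5 G v z₂ → z₁ ≠ z₂ → G.Adj z₁ z₂) ∧
    (∀ z, inZ5 G v z → ∀ i, G.Adj z (v i)) ∧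
    (∀ z d, inZ5 G v z → inD5 G v d → G.Adj z d) :=
  stmt1_general G hC4 v hv hC
end

section
/- Let G be any graph from the class H₁ with |S| ≥ 2. Then χ(G) = |S| + 1 if |S| ≥ 3, and χ(G) = 4 if |S| = 2; in both cases χ(G − {u₃,u₄,u₆}) = χ(G) − 1. -/
open SimpleGraph

/-- The six edges among the special vertices `u₁,…,u₆` (as `0,…,5`) of a graph in `H₁`:
`u₁u₂, u₂u₃, u₁u₄, u₁u₅, u₂u₅, u₅u₆`. -/
def h1edges : List (Fin 6 × Fin 6) := [(0, 1), (1, 2), (0, 3), (0, 4), (1, 4), (4, 5)]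

/-- The class `H₁`: the vertex set is partitioned into six vertices `u 0, …, u 5`
(`u₁,…,u₆` in the paper) and a nonempty clique `S`; the edges among the `u i` are exactly
`u₁u₂, u₂u₃, u₁u₄, u₁u₅, u₂u₅, u₅u₆`; `S` is complete to `{u₃, u₄, u₆}`; no other edges. -/
structure H1Data {V : Type*} (G : SimpleGraph V) where
  u : Fin 6 → V
  S : Finset V
  inj : Function.Injective u
  notin : ∀ i, u i ∉ S
  Sne : S.Nonempty
  cover : ∀ x : V, x ∈ S ∨ ∃ i, x = u i
  adj_iff : ∀ x y : V, G.Adj x y ↔ x ≠ y ∧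
    ((x ∈ S ∧ y ∈ S) ∨
     (∃ i j : Fin 6, x = u i ∧ y = u j ∧ ((i, j) ∈ h1edges ∨ (j, i) ∈ h1edges)) ∨
     (x ∈ S ∧ (y = u 2 ∨ y = u 3 ∨ y = u 5)) ∨
     (y ∈ S ∧ (x = u 2 ∨ x = u 3 ∨ x = u 5)))

/-!
Put `n = max |S| 3`. As `S` has no neighbours among `u₁, u₂, u₅`, coloring `S` injectively and
`u₁, u₂, u₅` by three distinct colors gives an `n`-coloring of `G − {u₃, u₄, u₆}`; since
`{u₃, u₄, u₆}` is independent, one new color extends it to `G`. Conversely `G` is not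
`n`-colorable: for `|S| ≥ 3`, `S ∪ {u₃}` is a clique of size `n + 1`; for `|S| = 2`, a
3-coloring gives `u₃, u₄, u₆` the single color missed by `S`, and then the triangle
`u₁u₂u₅`, whose vertices see `u₄, u₃, u₆` respectively, has only two colors left. Hence
`χ(G) = n + 1`, and `χ(G − {u₃, u₄, u₆}) = n` because an `(n - 1)`-coloring of it would extend
to an `n`-coloring of `G`.
-/

theorem SimpleGraph.Colorable.succ_of_isIndepSet_compl {V : Type*} {G : SimpleGraph V}
    {A : Set V} {n : ℕ} (hA : G.IsIndepSet Aᶜ) (hc : (G.induce A).Colorable n) :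
    G.Colorable (n + 1) := by
  classical
  obtain ⟨C⟩ := hc
  refine ⟨Coloring.mk (fun x => if hx : x ∈ A then (C ⟨x, hx⟩).castSucc else Fin.last n) ?_⟩
  intro a b hab
  by_cases ha : a ∈ A <;> by_cases hb : b ∈ A <;> simp only [ha, hb, dite_true, dite_false]
  · exact fun e => C.valid (show (G.induce A).Adj ⟨a, ha⟩ ⟨b, hb⟩ from hab)
      (Fin.castSucc_injective _ e)
  · exact (Fin.castSucc_lt_last _).ne
  · exact (Fin.castSucc_lt_last _).ne'
  · exact (hA ha hb hab.ne hab).elim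

lemma fin_three_eq_of_ne_of_ne {a b x y : Fin 3} (hab : a ≠ b) (hxa : x ≠ a) (hxb : x ≠ b)
    (hya : y ≠ a) (hyb : y ≠ b) : x = y := by
  revert a b x y; decide

lemma fin_three_eq_or_eq_or_eq_of_pairwise_ne {x y z : Fin 3} (hxy : x ≠ y) (hxz : x ≠ z)
    (hyz : y ≠ z) (c : Fin 3) : c = x ∨ c = y ∨ c = z := by
  revert x y z c; decide

lemma ne_of_mem_h1edges : ∀ i j : Fin 6, (i, j) ∈ h1edges → i ≠ j := by decide

def h1color : Fin 6 → Fin 3 := ![0, 1, 0, 1, 2, 0]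

lemma h1color_ne_of_mem_h1edges : ∀ i j : Fin 6, (i, j) ∈ h1edges → h1color i ≠ h1color j := by
  decide

namespace H1Data

variable {V : Type*} {G : SimpleGraph V} (h : H1Data G)

lemma u_ne_of_mem_S {x : V} (hx : x ∈ h.S) (i : Fin 6) : h.u i ≠ x :=
  fun e => h.notin i (e ▸ hx)

lemma isClique_S : G.IsClique (h.S : Set V) :=
  fun _ hx _ hy hxy => (h.adj_iff _ _).2 ⟨hxy, Or.inl ⟨hx, hy⟩⟩

lemma adj_u_u_iff {i j : Fin 6} :
    G.Adj (h.u i) (h.u j) ↔ (i, j) ∈ h1edges ∨ (j, i) ∈ h1edges := by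
  refine ⟨fun hadj => ?_, fun he => (h.adj_iff _ _).2 ⟨?_, Or.inr (Or.inl ⟨i, j, rfl, rfl, he⟩)⟩⟩
  · obtain ⟨-, hS | ⟨i', j', hi, hj, he⟩ | hS | hS⟩ := (h.adj_iff _ _).1 hadj
    · exact (h.notin i hS.1).elim
    · rwa [h.inj hi, h.inj hj]
    · exact (h.notin i hS.1).elim
    · exact (h.notin j hS.1).elim
  · rcases he with he | he
    · exact h.inj.ne (ne_of_mem_h1edges i j he)
    · exact h.inj.ne (ne_of_mem_h1edges j i he).symm

lemma adj_u_iff_of_mem_S {x : V} (hx : x ∈ h.S) {i : Fin 6} :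
    G.Adj x (h.u i) ↔ i = 2 ∨ i = 3 ∨ i = 5 := by
  refine ⟨fun hadj => ?_, fun hi => (h.adj_iff _ _).2 ⟨(h.u_ne_of_mem_S hx i).symm, ?_⟩⟩
  · obtain ⟨-, hS | ⟨i', -, hi', -⟩ | ⟨-, hi⟩ | ⟨hS, -⟩⟩ := (h.adj_iff _ _).1 hadj
    · exact (h.notin i hS.2).elim
    · exact (h.u_ne_of_mem_S hx i' hi'.symm).elim
    · simpa only [h.inj.eq_iff] using hi
    · exact (h.notin i hS).elim
  · exact Or.inr (Or.inr (Or.inl ⟨hx, by rcases hi with rfl | rfl | rfl <;> simp⟩))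

lemma isIndepSet_compl : G.IsIndepSet {x : V | x ≠ h.u 2 ∧ x ≠ h.u 3 ∧ x ≠ h.u 5}ᶜ := by
  have hT : ∀ x ∈ {x : V | x ≠ h.u 2 ∧ x ≠ h.u 3 ∧ x ≠ h.u 5}ᶜ,
      ∃ i : Fin 6, (i = 2 ∨ i = 3 ∨ i = 5) ∧ x = h.u i := by
    intro x hx
    simp only [Set.mem_compl_iff, Set.mem_ofPred_eq, not_and_or, not_not] at hx
    rcases hx with rfl | rfl | rfl <;> exact ⟨_, by decide, rfl⟩
  intro x hx y hy _ hadj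
  obtain ⟨i, hi, rfl⟩ := hT x hx
  obtain ⟨j, hj, rfl⟩ := hT y hy
  rw [h.adj_u_u_iff] at hadj
  revert hadj
  rcases hi with rfl | rfl | rfl <;> rcases hj with rfl | rfl | rfl <;> decide

open Classical in
noncomputable def coloring {n : ℕ} (hS : h.S.card ≤ n) (h3 : 3 ≤ n) (x : V) : Fin n :=
  if hx : x ∈ h.S then Fin.castLE hS (h.S.equivFin ⟨x, hx⟩)
  else Fin.castLE h3 (h1color (Function.invFun h.u x))

lemma coloring_u {n : ℕ} (hS : h.S.card ≤ n) (h3 : 3 ≤ n) (i : Fin 6) :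
    h.coloring hS h3 (h.u i) = Fin.castLE h3 (h1color i) := by
  rw [coloring, dif_neg (h.notin i), Function.leftInverse_invFun h.inj i]

lemma coloring_injOn_S {n : ℕ} (hS : h.S.card ≤ n) (h3 : 3 ≤ n) :
    Set.InjOn (h.coloring hS h3) h.S := by
  intro x hx y hy e
  simp only [coloring, dif_pos (Finset.mem_coe.1 hx), dif_pos (Finset.mem_coe.1 hy)] at e
  exact congrArg Subtype.val (h.S.equivFin.injective (Fin.castLE_injective hS e))

lemma colorable_induce {n : ℕ} (hS : h.S.card ≤ n) (h3 : 3 ≤ n) :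
    (G.induce {x : V | x ≠ h.u 2 ∧ x ≠ h.u 3 ∧ x ≠ h.u 5}).Colorable n := by
  refine ⟨Coloring.mk (fun x => h.coloring hS h3 x) ?_⟩
  rintro ⟨a, ha⟩ ⟨b, hb⟩ (hab : G.Adj a b)
  show h.coloring hS h3 a ≠ h.coloring hS h3 b
  have hT : ∀ {i : Fin 6}, i = 2 ∨ i = 3 ∨ i = 5 → h.u i ∉
      {x : V | x ≠ h.u 2 ∧ x ≠ h.u 3 ∧ x ≠ h.u 5} := by
    rintro i (rfl | rfl | rfl) hi <;> simp at hi
  rcases h.cover a with haS | ⟨i, rfl⟩ <;> rcases h.cover b with hbS | ⟨j, rfl⟩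
  · exact fun e => hab.ne (h.coloring_injOn_S hS h3 haS hbS e)
  · exact (hT ((h.adj_u_iff_of_mem_S haS).1 hab) hb).elim
  · exact (hT ((h.adj_u_iff_of_mem_S hbS).1 hab.symm) ha).elim
  · rw [h.coloring_u, h.coloring_u, Ne, Fin.castLE_inj]
    rcases (h.adj_u_u_iff).1 hab with he | he
    · exact h1color_ne_of_mem_h1edges i j he
    · exact (h1color_ne_of_mem_h1edges j i he).symm

lemma not_colorable_card : ¬ G.Colorable h.S.card := by
  classical
  intro hc
  have hclique : G.IsClique (insert (h.u 2) h.S : Finset V) := by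
    rw [Finset.coe_insert, isClique_insert]
    exact ⟨h.isClique_S, fun x hx _ => ((h.adj_u_iff_of_mem_S hx).2 (by decide)).symm⟩
  have := hclique.card_le_of_colorable hc
  rw [Finset.card_insert_of_notMem (h.notin 2)] at this
  omega

lemma not_colorable_three (hS : h.S.card = 2) : ¬ G.Colorable 3 := by
  classical
  rintro ⟨C⟩
  obtain ⟨a, b, hab, hSab⟩ := Finset.card_eq_two.1 hS
  have ha : a ∈ h.S := by simp [hSab]
  have hb : b ∈ h.S := by simp [hSab]
  have hadj : ∀ i j : Fin 6, (i, j) ∈ h1edges → C (h.u i) ≠ C (h.u j) :=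
    fun i j he => C.valid ((h.adj_u_u_iff).2 (Or.inl he))
  have hTS : ∀ i : Fin 6, i = 2 ∨ i = 3 ∨ i = 5 → C (h.u i) ≠ C a ∧ C (h.u i) ≠ C b :=
    fun i hi => ⟨(C.valid ((h.adj_u_iff_of_mem_S ha).2 hi)).symm,
      (C.valid ((h.adj_u_iff_of_mem_S hb).2 hi)).symm⟩
  have hT : ∀ i : Fin 6, i = 2 ∨ i = 3 ∨ i = 5 → C (h.u i) = C (h.u 2) := fun i hi =>
    fin_three_eq_of_ne_of_ne (C.valid (h.isClique_S ha hb hab)) (hTS i hi).1 (hTS i hi).2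
      (hTS 2 (by decide)).1 (hTS 2 (by decide)).2
  rcases fin_three_eq_or_eq_or_eq_of_pairwise_ne (hadj 0 1 (by decide)) (hadj 0 4 (by decide))
      (hadj 1 4 (by decide)) (C (h.u 2)) with e | e | e
  · exact hadj 0 3 (by decide) ((hT 3 (by decide)).trans e).symm
  · exact hadj 1 2 (by decide) e.symm
  · exact hadj 4 5 (by decide) ((hT 5 (by decide)).trans e).symm

end H1Data

theorem stmt4_general {V : Type*} {G : SimpleGraph V} (h : H1Data G)
    (h2 : 2 ≤ h.S.card) :
    (3 ≤ h.S.card → G.chromaticNumber = ((h.S.card + 1 : ℕ) : ℕ∞)) ∧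
    (h.S.card = 2 → G.chromaticNumber = (4 : ℕ∞)) ∧
    G.chromaticNumber =
      (G.induce {x : V | x ≠ h.u 2 ∧ x ≠ h.u 3 ∧ x ≠ h.u 5}).chromaticNumber + 1 := by
  have hG : ¬ G.Colorable (max h.S.card 3) := by
    rcases le_or_gt 3 h.S.card with hs | hs
    · rw [max_eq_left hs]; exact h.not_colorable_card
    · rw [max_eq_right hs.le]; exact h.not_colorable_three (by omega)
  have hA := h.colorable_induce (le_max_left _ 3) (le_max_right _ 3)
  obtain ⟨m, hm⟩ : ∃ m, max h.S.card 3 = m + 1 := ⟨max h.S.card 3 - 1, by omega⟩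
  rw [hm] at hA hG
  have hχ : G.chromaticNumber = (m + 1 : ℕ) + 1 :=
    chromaticNumber_eq_iff_colorable_not_colorable.2
      ⟨hA.succ_of_isIndepSet_compl h.isIndepSet_compl, hG⟩
  have hχA : (G.induce {x : V | x ≠ h.u 2 ∧ x ≠ h.u 3 ∧ x ≠ h.u 5}).chromaticNumber = m + 1 :=
    chromaticNumber_eq_iff_colorable_not_colorable.2
      ⟨hA, fun hc => hG (hc.succ_of_isIndepSet_compl h.isIndepSet_compl)⟩
  refine ⟨fun hs => ?_, fun hs => ?_, by rw [hχ, hχA, Nat.cast_succ]⟩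
  · rw [hχ, ← hm, max_eq_left hs]; rfl
  · rw [hχ, ← hm, hs]; rfl

/-- for `G ∈ H₁` with `|S| ≥ 2`: `χ(G) = |S| + 1` if `|S| ≥ 3`, `χ(G) = 4`
if `|S| = 2`, and in both cases `χ(G − {u₃, u₄, u₆}) = χ(G) − 1`. -/
theorem stmt4 {V : Type*} [Fintype V] {G : SimpleGraph V} (h : H1Data G)
    (h2 : 2 ≤ h.S.card) :
    (3 ≤ h.S.card → G.chromaticNumber = ((h.S.card + 1 : ℕ) : ℕ∞)) ∧
    (h.S.card = 2 → G.chromaticNumber = (4 : ℕ∞)) ∧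
    G.chromaticNumber =
      (G.induce {x : V | x ≠ h.u 2 ∧ x ≠ h.u 3 ∧ x ≠ h.u 5}).chromaticNumber + 1 :=
  stmt4_general h h2
end

section
/- Every graph G in the class H₂ satisfies χ(G) = max{|S₁∪S₂|, |S₂∪S₃|, |S₃∪S₄|} + 1, and the subgraph G − {u,v,w} is 3K₁-free (its vertex set is the union of two cliques). -/
/-! The cliques `{v} ∪ S₁ ∪ S₂`, `{v} ∪ S₂ ∪ S₃` and `{w} ∪ S₃ ∪ S₄` give the lower bound
`χ(G) ≥ M + 1`, where `M = max {|S₁ ∪ S₂|, |S₂ ∪ S₃|, |S₃ ∪ S₄|}`. Conversely, `S₁ ∪ ⋯ ∪ S₄`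
can be coloured from `[0, M)`: `S₂` takes `[0, |S₂|)`, the mutually anticomplete cliques `S₁` and
`S₃` both start at `|S₂|`, and `S₄` uses the `M - |S₃| ≥ |S₄|` colours not used on `S₃`; the
independent set `{u, v, w}` then receives the single extra colour `M`. Finally `G - {u, v, w}` is
covered by the two cliques `S₁ ∪ S₂` and `S₃ ∪ S₄`, so among any three of its vertices two are
adjacent. -/

open SimpleGraph

/-- The class `H₂`: the vertex set is partitioned into an independent set `{u, v, w}` and
four mutually disjoint cliques `S₁, S₂, S₃, S₄` with `S₁, S₂, S₄` nonempty; `S₂` is complete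
to `S₁ ∪ S₃`, `S₃` is complete to `S₄`; `u` is complete to `S₁ ∪ S₄`, `v` to `S₁ ∪ S₂ ∪ S₃`,
`w` to `S₂ ∪ S₃ ∪ S₄`; and there are no other edges. -/
structure H2Data {V : Type*} [DecidableEq V] (G : SimpleGraph V) where
  u : V
  v : V
  w : V
  S1 : Finset V
  S2 : Finset V
  S3 : Finset V
  S4 : Finset V
  huv : u ≠ v
  huw : u ≠ w
  hvw : v ≠ w
  notin : ∀ x : V, (x = u ∨ x = v ∨ x = w) → x ∉ S1 ∪ S2 ∪ S3 ∪ S4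
  d12 : Disjoint S1 S2
  d13 : Disjoint S1 S3
  d14 : Disjoint S1 S4
  d23 : Disjoint S2 S3
  d24 : Disjoint S2 S4
  d34 : Disjoint S3 S4
  ne1 : S1.Nonempty
  ne2 : S2.Nonempty
  ne4 : S4.Nonempty
  cover : ∀ x : V, (x = u ∨ x = v ∨ x = w) ∨ x ∈ S1 ∪ S2 ∪ S3 ∪ S4
  adj_iff : ∀ x y : V, G.Adj x y ↔ x ≠ y ∧
    ((x ∈ S1 ∧ y ∈ S1) ∨ (x ∈ S2 ∧ y ∈ S2) ∨ (x ∈ S3 ∧ y ∈ S3) ∨ (x ∈ S4 ∧ y ∈ S4) ∨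
     (x ∈ S2 ∧ y ∈ S1 ∪ S3) ∨ (y ∈ S2 ∧ x ∈ S1 ∪ S3) ∨
     (x ∈ S3 ∧ y ∈ S4) ∨ (y ∈ S3 ∧ x ∈ S4) ∨
     (x = u ∧ y ∈ S1 ∪ S4) ∨ (y = u ∧ x ∈ S1 ∪ S4) ∨
     (x = v ∧ y ∈ S1 ∪ S2 ∪ S3) ∨ (y = v ∧ x ∈ S1 ∪ S2 ∪ S3) ∨
     (x = w ∧ y ∈ S2 ∪ S3 ∪ S4) ∨ (y = w ∧ x ∈ S2 ∪ S3 ∪ S4))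

open Finset

theorem Finset.exists_injOn_mapsTo {α β : Type*} [Nonempty β] {s : Finset α} {t : Finset β}
    (h : #s ≤ #t) : ∃ f : α → β, Set.InjOn f s ∧ Set.MapsTo f s t := by
  classical
  obtain ⟨e⟩ := Function.Embedding.nonempty_of_card_le (α := s) (β := t) (by simpa using h)
  refine ⟨fun x ↦ if hx : x ∈ s then e ⟨x, hx⟩ else Classical.arbitrary β, ?_, ?_⟩
  · intro x (hx : x ∈ s) y (hy : y ∈ s) hxy
    simpa [hx, hy, Subtype.val_inj] using hxy
  · intro x (hx : x ∈ s)
    simp [hx]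

namespace SimpleGraph
variable {V : Type*} {G : SimpleGraph V}

theorem colorable_succ_of_isIndepSet_compl {s : Set V} {n : ℕ} (c : V → ℕ)
    (hc : ∀ x ∈ s, c x < n) (hcs : ∀ x ∈ s, ∀ y ∈ s, G.Adj x y → c x ≠ c y)
    (hs : G.IsIndepSet sᶜ) : G.Colorable (n + 1) := by
  classical
  refine (colorable_iff_exists_bdd_nat_coloring _).2
    ⟨Coloring.mk (fun x ↦ if x ∈ s then c x else n) fun {x y} hxy ↦ ?_, fun x ↦ ?_⟩
  · by_cases hx : x ∈ s <;> by_cases hy : y ∈ s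
    · simpa [hx, hy] using hcs x hx y hy hxy
    · simpa [hx, hy] using (hc x hx).ne
    · simpa [hx, hy] using (hc y hy).ne'
    · exact (hs hx hy hxy.ne hxy).elim
  · show (if x ∈ s then c x else n) < n + 1
    split_ifs with hx
    exacts [(hc x hx).trans (Nat.lt_succ_self n), Nat.lt_succ_self n]

theorem exists_adj_of_mem_union_isClique {s t : Set V} (hs : G.IsClique s) (ht : G.IsClique t)
    {x y z : V} (hx : x ∈ s ∪ t) (hy : y ∈ s ∪ t) (hz : z ∈ s ∪ t) (hxy : x ≠ y) (hxz : x ≠ z)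
    (hyz : y ≠ z) : G.Adj x y ∨ G.Adj x z ∨ G.Adj y z := by
  rcases hx with hx | hx <;> rcases hy with hy | hy <;> rcases hz with hz | hz
  all_goals first
    | exact .inl (hs hx hy hxy) | exact .inl (ht hx hy hxy)
    | exact .inr (.inl (hs hx hz hxz)) | exact .inr (.inl (ht hx hz hxz))
    | exact .inr (.inr (hs hy hz hyz)) | exact .inr (.inr (ht hy hz hyz))

end SimpleGraph

namespace H2Data
variable {V : Type*} [DecidableEq V] {G : SimpleGraph V} (h : H2Data G)

def inner : Finset V := h.S1 ∪ h.S2 ∪ h.S3 ∪ h.S4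

def maxPairCard : ℕ := max #(h.S1 ∪ h.S2) (max #(h.S2 ∪ h.S3) #(h.S3 ∪ h.S4))

theorem card_S1_add_card_S2_le : #h.S1 + #h.S2 ≤ h.maxPairCard :=
  card_union_of_disjoint h.d12 ▸ le_max_left _ _

theorem card_S2_add_card_S3_le : #h.S2 + #h.S3 ≤ h.maxPairCard :=
  card_union_of_disjoint h.d23 ▸ (le_max_left _ _).trans (le_max_right _ _)

theorem card_S3_add_card_S4_le : #h.S3 + #h.S4 ≤ h.maxPairCard :=
  card_union_of_disjoint h.d34 ▸ (le_max_right _ _).trans (le_max_right _ _)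

theorem isIndepSet_compl_inner : G.IsIndepSet (h.inner : Set V)ᶜ := by
  intro x (hx : x ∉ h.inner) y (hy : y ∉ h.inner) _ hxy
  have hx' := h.cover x
  have hy' := h.cover y
  simp only [inner, mem_union, not_or] at hx hy hx' hy'
  rw [h.adj_iff] at hxy
  simp [hx, hy] at hxy hx' hy'

theorem exists_palette_coloring : ∃ c : V → ℕ,
    (Set.InjOn c h.S1 ∧ Set.MapsTo c h.S1 (Ico #h.S2 (#h.S2 + #h.S1) : Finset ℕ)) ∧
    (Set.InjOn c h.S2 ∧ Set.MapsTo c h.S2 (range #h.S2 : Finset ℕ)) ∧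
    (Set.InjOn c h.S3 ∧ Set.MapsTo c h.S3 (Ico #h.S2 (#h.S2 + #h.S3) : Finset ℕ)) ∧
    (Set.InjOn c h.S4 ∧
      Set.MapsTo c h.S4 (range h.maxPairCard \ Ico #h.S2 (#h.S2 + #h.S3) : Finset ℕ)) := by
  obtain ⟨f1, inj1, maps1⟩ := exists_injOn_mapsTo (s := h.S1) (t := Ico #h.S2 (#h.S2 + #h.S1))
    (by simp)
  obtain ⟨f2, inj2, maps2⟩ := exists_injOn_mapsTo (s := h.S2) (t := range #h.S2) (by simp)
  obtain ⟨f3, inj3, maps3⟩ := exists_injOn_mapsTo (s := h.S3) (t := Ico #h.S2 (#h.S2 + #h.S3))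
    (by simp)
  obtain ⟨f4, inj4, maps4⟩ := exists_injOn_mapsTo (s := h.S4)
      (t := range h.maxPairCard \ Ico #h.S2 (#h.S2 + #h.S3)) (by
    have := h.card_S2_add_card_S3_le
    have := h.card_S3_add_card_S4_le
    rw [card_sdiff_of_subset fun k hk ↦ mem_range.2 (by have := mem_Ico.1 hk; omega)]
    simp; omega)
  let c : V → ℕ := fun x ↦
    if x ∈ h.S1 then f1 x else if x ∈ h.S2 then f2 x else if x ∈ h.S3 then f3 x else f4 x
  have e1 : Set.EqOn f1 c h.S1 := fun x hx ↦ (if_pos hx).symm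
  have e2 : Set.EqOn f2 c h.S2 := fun x (hx : x ∈ h.S2) ↦ by
    simp [c, hx, disjoint_right.1 h.d12 hx]
  have e3 : Set.EqOn f3 c h.S3 := fun x (hx : x ∈ h.S3) ↦ by
    simp [c, hx, disjoint_right.1 h.d13 hx, disjoint_right.1 h.d23 hx]
  have e4 : Set.EqOn f4 c h.S4 := fun x hx ↦ by
    simp [c, disjoint_right.1 h.d14 hx, disjoint_right.1 h.d24 hx, disjoint_right.1 h.d34 hx]
  exact ⟨c, ⟨inj1.congr e1, maps1.congr e1⟩, ⟨inj2.congr e2, maps2.congr e2⟩,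
    ⟨inj3.congr e3, maps3.congr e3⟩, ⟨inj4.congr e4, maps4.congr e4⟩⟩

theorem exists_coloring_inner : ∃ c : V → ℕ, (∀ x ∈ h.inner, c x < h.maxPairCard) ∧
    ∀ x ∈ h.inner, ∀ y ∈ h.inner, G.Adj x y → c x ≠ c y := by
  obtain ⟨c, ⟨inj1, maps1⟩, ⟨inj2, maps2⟩, ⟨inj3, maps3⟩, ⟨inj4, maps4⟩⟩ :=
    h.exists_palette_coloring
  have ne21 : ∀ x ∈ h.S2, ∀ y ∈ h.S1 ∪ h.S3, c x ≠ c y := by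
    intro x hx y hy
    have := mem_range.1 (maps2 hx)
    rcases mem_union.1 hy with hy | hy
    · have := mem_Ico.1 (maps1 hy); omega
    · have := mem_Ico.1 (maps3 hy); omega
  have ne34 : ∀ x ∈ h.S3, ∀ y ∈ h.S4, c x ≠ c y := fun x hx y hy hxy ↦
    (mem_sdiff.1 (maps4 hy)).2 (hxy ▸ maps3 hx)
  refine ⟨c, fun x hx ↦ ?_, fun x hx y hy hxy ↦ ?_⟩
  · have := h.card_S1_add_card_S2_le
    have := h.card_S2_add_card_S3_le
    simp only [inner, mem_union] at hx
    rcases hx with ((hx | hx) | hx) | hx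
    · have := mem_Ico.1 (maps1 hx); omega
    · have := mem_range.1 (maps2 hx); omega
    · have := mem_Ico.1 (maps3 hx); omega
    · exact mem_range.1 (mem_sdiff.1 (maps4 hx)).1
  have hout : ∀ z ∈ h.inner, z = h.u ∨ z = h.v ∨ z = h.w → False := fun z hz hz' ↦
    h.notin z hz' hz
  obtain ⟨hne, h11 | h22 | h33 | h44 | h21 | h12 | h34 | h43 | hu | hu' | hv | hv' | hw | hw'⟩ :=
    (h.adj_iff x y).1 hxy
  exacts [inj1.ne h11.1 h11.2 hne, inj2.ne h22.1 h22.2 hne, inj3.ne h33.1 h33.2 hne,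
    inj4.ne h44.1 h44.2 hne, ne21 x h21.1 y h21.2, (ne21 y h12.1 x h12.2).symm,
    ne34 x h34.1 y h34.2, (ne34 y h43.1 x h43.2).symm, (hout x hx (.inl hu.1)).elim,
    (hout y hy (.inl hu'.1)).elim, (hout x hx (.inr (.inl hv.1))).elim,
    (hout y hy (.inr (.inl hv'.1))).elim, (hout x hx (.inr (.inr hw.1))).elim,
    (hout y hy (.inr (.inr hw'.1))).elim]

theorem colorable : G.Colorable (h.maxPairCard + 1) :=
  have ⟨c, hc, hcs⟩ := h.exists_coloring_inner
  colorable_succ_of_isIndepSet_compl c hc hcs h.isIndepSet_compl_inner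

theorem isClique_insert_v_S1_S2 : G.IsClique (insert h.v (h.S1 ∪ h.S2) : Finset V) := by
  intro x hx y hy hxy
  simp only [coe_insert, coe_union, Set.mem_insert_iff, Set.mem_union, mem_coe] at hx hy
  rcases hx with rfl | hx | hx <;> rcases hy with rfl | hy | hy <;> simp_all [h.adj_iff]

theorem isClique_insert_v_S2_S3 : G.IsClique (insert h.v (h.S2 ∪ h.S3) : Finset V) := by
  intro x hx y hy hxy
  simp only [coe_insert, coe_union, Set.mem_insert_iff, Set.mem_union, mem_coe] at hx hy
  rcases hx with rfl | hx | hx <;> rcases hy with rfl | hy | hy <;> simp_all [h.adj_iff]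

theorem isClique_insert_w_S3_S4 : G.IsClique (insert h.w (h.S3 ∪ h.S4) : Finset V) := by
  intro x hx y hy hxy
  simp only [coe_insert, coe_union, Set.mem_insert_iff, Set.mem_union, mem_coe] at hx hy
  rcases hx with rfl | hx | hx <;> rcases hy with rfl | hy | hy <;> simp_all [h.adj_iff]

theorem exists_isClique_card_eq : ∃ T : Finset V, G.IsClique T ∧ #T = h.maxPairCard + 1 := by
  have hv : h.v ∉ h.inner := h.notin h.v (.inr (.inl rfl))
  have hw : h.w ∉ h.inner := h.notin h.w (.inr (.inr rfl))
  simp only [inner, mem_union, not_or] at hv hw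
  rcases max_choice #(h.S1 ∪ h.S2) (max #(h.S2 ∪ h.S3) #(h.S3 ∪ h.S4)) with hM | hM
  · refine ⟨_, h.isClique_insert_v_S1_S2, ?_⟩
    rw [card_insert_of_notMem (by simp [hv]), maxPairCard, hM]
  rcases max_choice #(h.S2 ∪ h.S3) #(h.S3 ∪ h.S4) with hM' | hM'
  · refine ⟨_, h.isClique_insert_v_S2_S3, ?_⟩
    rw [card_insert_of_notMem (by simp [hv]), maxPairCard, hM, hM']
  · refine ⟨_, h.isClique_insert_w_S3_S4, ?_⟩
    rw [card_insert_of_notMem (by simp [hw]), maxPairCard, hM, hM']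

theorem chromaticNumber_eq : G.chromaticNumber = (h.maxPairCard + 1 : ℕ) := by
  obtain ⟨T, hT, hcard⟩ := h.exists_isClique_card_eq
  exact le_antisymm h.colorable.chromaticNumber_le (hcard ▸ hT.card_le_chromaticNumber)

theorem mem_S1_union_S2_or_mem_S3_union_S4 {x : V} (hx : x ∉ ({h.u, h.v, h.w} : Finset V)) :
    x ∈ (h.S1 ∪ h.S2 : Set V) ∪ (h.S3 ∪ h.S4 : Set V) := by
  have := h.cover x
  simp only [mem_insert, mem_singleton] at hx
  simp only [mem_union] at this
  simp only [Set.mem_union, mem_coe]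
  tauto

end H2Data

theorem stmt6_general {V : Type*} [DecidableEq V] {G : SimpleGraph V} (h : H2Data G) :
    G.chromaticNumber =
      ((max ((h.S1 ∪ h.S2).card) (max ((h.S2 ∪ h.S3).card) ((h.S3 ∪ h.S4).card)) + 1 : ℕ) : ℕ∞) ∧
    ∀ x y z : V, x ∉ ({h.u, h.v, h.w} : Finset V) → y ∉ ({h.u, h.v, h.w} : Finset V) →
      z ∉ ({h.u, h.v, h.w} : Finset V) → x ≠ y → x ≠ z → y ≠ z →
      ¬ G.Adj x y → ¬ G.Adj x z → ¬ G.Adj y z → False := by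
  refine ⟨h.chromaticNumber_eq, fun x y z hx hy hz hxy hxz hyz nxy nxz nyz ↦ ?_⟩
  have hA : G.IsClique (h.S1 ∪ h.S2 : Set V) :=
    h.isClique_insert_v_S1_S2.subset (by simp [Set.subset_insert])
  have hB : G.IsClique (h.S3 ∪ h.S4 : Set V) :=
    h.isClique_insert_w_S3_S4.subset (by simp [Set.subset_insert])
  rcases exists_adj_of_mem_union_isClique hA hB (h.mem_S1_union_S2_or_mem_S3_union_S4 hx)
    (h.mem_S1_union_S2_or_mem_S3_union_S4 hy) (h.mem_S1_union_S2_or_mem_S3_union_S4 hz)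
    hxy hxz hyz with hadj | hadj | hadj
  exacts [nxy hadj, nxz hadj, nyz hadj]

/-- every `G ∈ H₂` satisfies
`χ(G) = max {|S₁∪S₂|, |S₂∪S₃|, |S₃∪S₄|} + 1`, and `G − {u, v, w}` is `3K₁`-free. -/
theorem stmt6 {V : Type*} [Fintype V] [DecidableEq V] {G : SimpleGraph V} (h : H2Data G) :
    G.chromaticNumber =
      ((max ((h.S1 ∪ h.S2).card) (max ((h.S2 ∪ h.S3).card) ((h.S3 ∪ h.S4).card)) + 1 : ℕ) : ℕ∞) ∧
    ∀ x y z : V, x ∉ ({h.u, h.v, h.w} : Finset V) → y ∉ ({h.u, h.v, h.w} : Finset V) →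
      z ∉ ({h.u, h.v, h.w} : Finset V) → x ≠ y → x ≠ z → y ≠ z →
      ¬ G.Adj x y → ¬ G.Adj x z → ¬ G.Adj y z → False :=
  stmt6_general h
end

section
/- Let G be a graph, ψ a χ(G)-coloring of G, and ℓ > χ(G). Suppose every ℓ-coloring φ of G can be recolored (by single-vertex recoloring steps through proper ℓ-colorings) to a χ(G)-coloring inducing the same color classes as ψ, recoloring each vertex at most p times. Then R_ℓ(G) is connected with diameter at most (2p+2)·n, where n = |V(G)|. -/
open SimpleGraph

/-!
Recolour `φ₁` and `φ₂` into colourings `τ₁`, `τ₂` with the colour classes of `ψ`, at most `p`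
recolourings per vertex each. Then `τ₂` is `τ₁` with its colours renamed, and as both use at most
`k < ℓ` colours a free colour always exists: a class whose target colour is free moves there
directly, and when every target colour is occupied one class is first parked on a free colour.
This recolours each vertex at most twice. Along any walk, deleting the idle steps leaves at most as
many steps as there are recolourings, so the concatenated walk can be shortened to `(2p + 2)·n`.
-/

open Finset

section RecolorSeq

variable {V : Type*} {G : SimpleGraph V} {ℓ : ℕ}

theorem IsRecolorSeq.mono {m m' : ℕ} {c : ℕ → V → Fin ℓ} (h : IsRecolorSeq G ℓ m c)
    (hm : m' ≤ m) : IsRecolorSeq G ℓ m' c :=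
  ⟨fun i hi => h.1 i (hi.trans hm), fun i hi => h.2 i (hi.trans_le hm)⟩

theorem IsRecolorSeq.congr {m : ℕ} {c c' : ℕ → V → Fin ℓ} (h : IsRecolorSeq G ℓ m c)
    (hc : ∀ i ≤ m, c i = c' i) : IsRecolorSeq G ℓ m c' := by
  refine ⟨fun i hi => hc i hi ▸ h.1 i hi, fun i hi => ?_⟩
  rw [← hc i hi.le, ← hc (i + 1) hi]
  exact h.2 i hi

theorem isRecolorSeq_add_iff {m₁ m₂ : ℕ} {c : ℕ → V → Fin ℓ} :
    IsRecolorSeq G ℓ (m₁ + m₂) c ↔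
      IsRecolorSeq G ℓ m₁ c ∧ IsRecolorSeq G ℓ m₂ fun i => c (m₁ + i) := by
  refine ⟨fun h => ⟨h.mono (by omega), fun i hi => h.1 _ (by omega), fun i hi => h.2 _ (by omega)⟩,
    fun ⟨h₁, h₂⟩ => ⟨fun i hi => ?_, fun i hi => ?_⟩⟩
  · rcases le_or_gt i m₁ with h | h
    · exact h₁.1 i h
    · obtain ⟨j, rfl⟩ := Nat.exists_eq_add_of_le h.le
      exact h₂.1 j (by omega)
  · rcases lt_or_ge i m₁ with h | h
    · exact h₁.2 i h
    · obtain ⟨j, rfl⟩ := Nat.exists_eq_add_of_le h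
      exact h₂.2 j (by omega)

theorem IsRecolorSeq.reverse {m : ℕ} {c : ℕ → V → Fin ℓ} (h : IsRecolorSeq G ℓ m c) :
    IsRecolorSeq G ℓ m fun j => c (m - j) := by
  refine ⟨fun i _ => h.1 _ (Nat.sub_le m i), fun i hi a b hab ha => ?_⟩
  have hi' : m - i = m - (i + 1) + 1 := by omega
  simp only [hi'] at ha ⊢
  exact (h.2 _ (by omega) a b hab (Ne.symm ha)).symm

theorem recolorCount_eq_sum (m : ℕ) (c : ℕ → V → Fin ℓ) (a : V) :
    recolorCount m c a = ∑ i ∈ range m, if c i a ≠ c (i + 1) a then 1 else 0 :=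
  card_filter _ _

theorem recolorCount_congr {m : ℕ} {c c' : ℕ → V → Fin ℓ} (hc : ∀ i ≤ m, c i = c' i) (a : V) :
    recolorCount m c a = recolorCount m c' a := by
  refine congrArg card (filter_congr fun i hi => ?_)
  rw [mem_range] at hi
  rw [hc i hi.le, hc (i + 1) hi]

theorem recolorCount_add (m₁ m₂ : ℕ) (c : ℕ → V → Fin ℓ) (a : V) :
    recolorCount (m₁ + m₂) c a = recolorCount m₁ c a + recolorCount m₂ (fun i => c (m₁ + i)) a := by
  simp only [recolorCount_eq_sum, sum_range_add]
  rfl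

theorem recolorCount_reverse (m : ℕ) (c : ℕ → V → Fin ℓ) (a : V) :
    recolorCount m (fun j => c (m - j)) a = recolorCount m c a := by
  rw [recolorCount_eq_sum, recolorCount_eq_sum,
    ← sum_range_reflect (fun i => if c i a ≠ c (i + 1) a then 1 else 0) m]
  refine sum_congr rfl fun i hi => ?_
  rw [mem_range] at hi
  rw [show m - i = m - 1 - i + 1 by omega, show m - (i + 1) = m - 1 - i by omega]
  exact if_congr ne_comm rfl rfl

theorem IsRecolorSeq.append {m₁ m₂ : ℕ} {c₁ c₂ : ℕ → V → Fin ℓ} (h₁ : IsRecolorSeq G ℓ m₁ c₁)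
    (h₂ : IsRecolorSeq G ℓ m₂ c₂) (hj : c₁ m₁ = c₂ 0) :
    ∃ c, IsRecolorSeq G ℓ (m₁ + m₂) c ∧ c 0 = c₁ 0 ∧ c (m₁ + m₂) = c₂ m₂ ∧
      ∀ a, recolorCount (m₁ + m₂) c a = recolorCount m₁ c₁ a + recolorCount m₂ c₂ a := by
  set c : ℕ → V → Fin ℓ := fun j => if j ≤ m₁ then c₁ j else c₂ (j - m₁)
  have hfst : ∀ i ≤ m₁, c₁ i = c i := fun i hi => (if_pos hi).symm
  have hsnd : ∀ i, c₂ i = c (m₁ + i) := by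
    intro i
    rcases i.eq_zero_or_pos with rfl | hi
    · simp [c, hj]
    · simp [c, show ¬ m₁ + i ≤ m₁ by omega]
  refine ⟨c, isRecolorSeq_add_iff.2 ⟨h₁.congr hfst, h₂.congr fun i _ => hsnd i⟩,
    (hfst 0 (Nat.zero_le _)).symm, (hsnd m₂).symm, fun a => ?_⟩
  rw [recolorCount_add, recolorCount_congr hfst, recolorCount_congr fun i _ => hsnd i]

theorem IsRecolorSeq.exists_length_le_sum [Fintype V] {m : ℕ} {c : ℕ → V → Fin ℓ}
    (h : IsRecolorSeq G ℓ m c) :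
    ∃ m' c', IsRecolorSeq G ℓ m' c' ∧ c' 0 = c 0 ∧ c' m' = c m ∧
      m' ≤ ∑ a, recolorCount m c a := by
  induction m with
  | zero => exact ⟨0, c, h, rfl, rfl, Nat.zero_le _⟩
  | succ m ih =>
    obtain ⟨m', c', hc', h0, hm, hle⟩ := ih (h.mono m.le_succ)
    have hstep := (isRecolorSeq_add_iff.1 h).2
    simp only [recolorCount_add m 1, sum_add_distrib]
    by_cases hidle : c m = c (m + 1)
    · exact ⟨m', c', hc', h0, hm.trans hidle, hle.trans (Nat.le_add_right _ _)⟩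
    obtain ⟨a₀, ha₀⟩ := Function.ne_iff.1 hidle
    have hmoved : 1 ≤ ∑ a, recolorCount 1 (fun i => c (m + i)) a :=
      (show 0 < recolorCount 1 (fun i => c (m + i)) a₀ from card_pos.2 ⟨0, by simp [ha₀]⟩).trans_le
        (single_le_sum (fun _ _ => Nat.zero_le _) (mem_univ a₀))
    obtain ⟨c'', hc'', h0', hm', -⟩ := hc'.append hstep hm
    exact ⟨m' + 1, c'', hc'', h0'.trans h0, hm', add_le_add hle hmoved⟩

end RecolorSeq

section Recolorable

variable {V : Type*} {G : SimpleGraph V} {ℓ : ℕ}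

def Recolorable (G : SimpleGraph V) (ℓ : ℕ) (b : V → ℕ) (φ φ' : V → Fin ℓ) : Prop :=
  ∃ m c, IsRecolorSeq G ℓ m c ∧ c 0 = φ ∧ c m = φ' ∧ ∀ a, recolorCount m c a ≤ b a

variable {b b' : V → ℕ} {φ φ' : V → Fin ℓ}

theorem Recolorable.refl (hφ : IsProperColoring G ℓ φ) (b : V → ℕ) : Recolorable G ℓ b φ φ :=
  ⟨0, fun _ => φ, ⟨fun _ _ => hφ, fun _ h => absurd h (Nat.not_lt_zero _)⟩, rfl, rfl,
    fun _ => by simp [recolorCount]⟩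

theorem Recolorable.mono (h : Recolorable G ℓ b φ φ') (hb : b ≤ b') : Recolorable G ℓ b' φ φ' :=
  let ⟨m, c, hc, h0, hm, hcount⟩ := h
  ⟨m, c, hc, h0, hm, fun a => (hcount a).trans (hb a)⟩

theorem Recolorable.trans {φ'' : V → Fin ℓ} (h₁ : Recolorable G ℓ b φ φ')
    (h₂ : Recolorable G ℓ b' φ' φ'') : Recolorable G ℓ (b + b') φ φ'' := by
  obtain ⟨m₁, c₁, hc₁, rfl, rfl, hb₁⟩ := h₁
  obtain ⟨m₂, c₂, hc₂, hj, rfl, hb₂⟩ := h₂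
  obtain ⟨c, hc, h0, hm, hcount⟩ := hc₁.append hc₂ hj.symm
  exact ⟨m₁ + m₂, c, hc, h0, hm, fun a => (hcount a).trans_le (add_le_add (hb₁ a) (hb₂ a))⟩

theorem Recolorable.symm (h : Recolorable G ℓ b φ φ') : Recolorable G ℓ b φ' φ := by
  obtain ⟨m, c, hc, rfl, rfl, hb⟩ := h
  exact ⟨m, fun j => c (m - j), hc.reverse, by simp, by simp,
    fun a => (recolorCount_reverse m c a).trans_le (hb a)⟩

theorem Recolorable.exists_length_le_sum [Fintype V] (h : Recolorable G ℓ b φ φ') :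
    ∃ m c, IsRecolorSeq G ℓ m c ∧ c 0 = φ ∧ c m = φ' ∧ m ≤ ∑ a, b a := by
  obtain ⟨m, c, hc, rfl, rfl, hb⟩ := h
  obtain ⟨m', c', hc', h0, hm, hle⟩ := hc.exists_length_le_sum
  exact ⟨m', c', hc', h0, hm, hle.trans (sum_le_sum fun a _ => hb a)⟩

variable [DecidableEq V]

theorem Recolorable.update {v : V} {t : Fin ℓ} (hφ : IsProperColoring G ℓ φ)
    (hφ' : IsProperColoring G ℓ (Function.update φ v t)) :
    Recolorable G ℓ (Pi.single v 1) φ (Function.update φ v t) := by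
  refine ⟨1, fun i => if i = 0 then φ else Function.update φ v t,
    ⟨fun i _ => ?_, fun i hi a b hab ha => ?_⟩, rfl, rfl, fun a => ?_⟩
  · dsimp only
    split_ifs
    exacts [hφ, hφ']
  · obtain rfl : i = 0 := by omega
    obtain rfl : a = v := by
      by_contra hav
      simp [Function.update_of_ne hav] at ha
    simp [Function.update_of_ne hab.symm]
  · by_cases hav : a = v
    · subst hav
      rw [Pi.single_eq_same]
      exact (card_filter_le _ _).trans_eq (card_range 1)
    · simp [recolorCount, hav]

theorem IsProperColoring.piecewise_const_of_subset {A A' : Finset V} {t : Fin ℓ}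
    (hφ : IsProperColoring G ℓ φ) (hA : IsProperColoring G ℓ (A.piecewise (fun _ => t) φ))
    (hA' : A' ⊆ A) : IsProperColoring G ℓ (A'.piecewise (fun _ => t) φ) := by
  intro a b hab
  have hAab := hA hab
  by_cases ha : a ∈ A' <;> by_cases hb : b ∈ A' <;>
    simp only [Finset.piecewise, ha, hb, if_true, if_false]
  · simp [Finset.piecewise, hA' ha, hA' hb] at hAab
  · by_cases hbA : b ∈ A <;> simp_all [Finset.piecewise, hA' ha]
  · by_cases haA : a ∈ A <;> simp_all [Finset.piecewise, hA' hb]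
  · exact hφ hab

theorem Recolorable.piecewise_const {A : Finset V} {t : Fin ℓ} (hφ : IsProperColoring G ℓ φ)
    (hA : IsProperColoring G ℓ (A.piecewise (fun _ => t) φ)) :
    Recolorable G ℓ (A.piecewise 1 0) φ (A.piecewise (fun _ => t) φ) := by
  induction A using Finset.induction_on with
  | empty => simpa using Recolorable.refl hφ 0
  | @insert a A ha ih =>
    have hA' := hφ.piecewise_const_of_subset hA (subset_insert a A)
    rw [piecewise_insert] at hA
    simp only [piecewise_insert]
    refine ((ih hA').trans (Recolorable.update hA' hA)).mono fun w => ?_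
    by_cases hw : w = a
    · subst hw
      simp [ha]
    · simp [hw]

end Recolorable

section Renaming

variable {V : Type*} {G : SimpleGraph V} {ℓ : ℕ}

theorem IsProperColoring.of_factorsThrough {ℓ' : ℕ} {f : V → Fin ℓ} {g : V → Fin ℓ'}
    (hg : IsProperColoring G ℓ' g) (hgf : g.FactorsThrough f) : IsProperColoring G ℓ f :=
  fun _ _ hab hf => hg hab (hgf hf)

theorem natCard_range_eq_of_eq_iff_eq {α β γ : Type*} {f : α → β} {g : α → γ}
    (h : ∀ a b, f a = f b ↔ g a = g b) : Nat.card (Set.range f) = Nat.card (Set.range g) :=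
  Nat.card_congr <| (Setoid.quotientKerEquivRange f).symm.trans <|
    (Quotient.congrRight fun a b => (Setoid.ker_def.trans (h a b)).trans Setoid.ker_def.symm).trans
      (Setoid.quotientKerEquivRange g)

theorem exists_notMem_range_of_natCard_lt {α : Type*} {f : α → Fin ℓ}
    (hf : Nat.card (Set.range f) < ℓ) : ∃ t, t ∉ Set.range f := by
  by_contra! h
  rw [Set.eq_univ_of_forall h] at hf
  simp at hf

variable {τ τ' : V → Fin ℓ} {v : V} {t : Fin ℓ}

def recolorClass (τ : V → Fin ℓ) (v : V) (t : Fin ℓ) : V → Fin ℓ :=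
  fun w => if τ w = τ v then t else τ w

theorem recolorClass_eq_iff (ht : t ∉ Set.range τ)
    (a b : V) : recolorClass τ v t a = recolorClass τ v t b ↔ τ a = τ b := by
  have hne : ∀ w, τ w ≠ t := fun w hw => ht ⟨w, hw⟩
  unfold recolorClass
  split_ifs with ha hb hb
  · simp [ha, hb]
  · exact iff_of_false (hne b).symm fun h => hb (h.symm.trans ha)
  · exact iff_of_false (hne a) fun h => ha (h.trans hb)
  · rfl

theorem IsProperColoring.recolorClass (hτ : IsProperColoring G ℓ τ) (ht : t ∉ Set.range τ) :
    IsProperColoring G ℓ (recolorClass τ v t) :=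
  hτ.of_factorsThrough fun a b => (recolorClass_eq_iff ht a b).1

variable [Fintype V]

/-- The invariant of the renaming induction: a vertex at its target colour is never recoloured,
and one whose colour is not a target colour is recoloured at most once. -/
def renamingBudget (τ τ' : V → Fin ℓ) (w : V) : ℕ :=
  if τ w = τ' w then 0 else if τ w ∈ Set.range τ' then 2 else 1

theorem renamingBudget_le_two (τ τ' : V → Fin ℓ) (w : V) : renamingBudget τ τ' w ≤ 2 := by
  unfold renamingBudget
  split_ifs <;> omega

theorem add_renamingBudget_recolorClass_le_of_notMem_range
    (hker : ∀ a b, τ a = τ b ↔ τ' a = τ' b) (hv : τ' v ∉ Set.range τ) (w : V) :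
    (if τ w = τ v then 1 else 0) + renamingBudget (recolorClass τ v (τ' v)) τ' w ≤
      renamingBudget τ τ' w := by
  unfold renamingBudget recolorClass
  by_cases hw : τ w = τ v
  · have hw' : τ' w = τ' v := (hker w v).1 hw
    have hne : τ w ≠ τ' w := fun h => hv ⟨w, h.trans hw'⟩
    rw [if_pos hw, if_pos hw, if_neg hne, hw', if_pos rfl]
    split_ifs <;> omega
  · simp only [if_neg hw]
    omega

theorem add_renamingBudget_recolorClass_le_of_mem_range
    (hker : ∀ a b, τ a = τ b ↔ τ' a = τ' b) (hv : τ v ≠ τ' v) (hvr : τ v ∈ Set.range τ')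
    (ht : t ∉ Set.range τ') (w : V) :
    (if τ w = τ v then 1 else 0) + renamingBudget (recolorClass τ v t) τ' w ≤
      renamingBudget τ τ' w := by
  unfold renamingBudget recolorClass
  by_cases hw : τ w = τ v
  · have hne : τ w ≠ τ' w := fun h => hv (hw.symm.trans (h.trans ((hker w v).1 hw)))
    have htw : t ≠ τ' w := fun h => ht ⟨w, h.symm⟩
    rw [if_pos hw, if_pos hw, if_neg htw, if_neg ht, if_neg hne, if_pos (by rwa [hw])]
  · simp only [if_neg hw]
    omega

theorem exists_add_renamingBudget_recolorClass_le (hker : ∀ a b, τ a = τ b ↔ τ' a = τ' b)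
    (hfree : Nat.card (Set.range τ') < ℓ) (hne : τ ≠ τ') :
    ∃ v t, t ∉ Set.range τ ∧ ∀ w, (if τ w = τ v then 1 else 0) +
      renamingBudget (recolorClass τ v t) τ' w ≤ renamingBudget τ τ' w := by
  by_cases hused : ∃ v, τ' v ∉ Set.range τ
  · obtain ⟨v, hv⟩ := hused
    exact ⟨v, τ' v, hv, add_renamingBudget_recolorClass_le_of_notMem_range hker hv⟩
  push Not at hused
  obtain ⟨t, ht⟩ :=
    exists_notMem_range_of_natCard_lt ((natCard_range_eq_of_eq_iff_eq hker).trans_lt hfree)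
  obtain ⟨u, hu⟩ := Function.ne_iff.1 hne
  obtain ⟨v, hv⟩ := hused u
  have hvu : τ v ≠ τ' v := fun h => hu (((hker u v).2 (hv.symm.trans h)).trans hv)
  exact ⟨v, t, ht, add_renamingBudget_recolorClass_le_of_mem_range hker hvu ⟨u, hv.symm⟩
    (fun ⟨w, hw⟩ => ht (hw ▸ hused w))⟩

variable [DecidableEq V]

theorem Recolorable.recolorClass (hτ : IsProperColoring G ℓ τ) (ht : t ∉ Set.range τ) :
    Recolorable G ℓ (fun w => if τ w = τ v then 1 else 0) τ (recolorClass τ v t) := by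
  have hpw :
      (univ.filter fun w => τ w = τ v).piecewise (fun _ => t) τ = _root_.recolorClass τ v t := by
    funext w
    simp [Finset.piecewise, _root_.recolorClass]
  have h := Recolorable.piecewise_const hτ (hpw ▸ IsProperColoring.recolorClass hτ ht)
  rw [hpw] at h
  convert h using 1
  funext w
  simp [Finset.piecewise]

theorem recolorable_renamingBudget (hτ : IsProperColoring G ℓ τ)
    (hker : ∀ a b, τ a = τ b ↔ τ' a = τ' b) (hfree : Nat.card (Set.range τ') < ℓ) :
    Recolorable G ℓ (renamingBudget τ τ') τ τ' := by
  induction hμ : ∑ w, renamingBudget τ τ' w using Nat.strong_induction_on generalizing τ with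
  | _ μ ih =>
  by_cases hne : τ = τ'
  · subst hne
    exact Recolorable.refl hτ _
  obtain ⟨v, t, ht, hle⟩ := exists_add_renamingBudget_recolorClass_le hker hfree hne
  have hker' : ∀ a b, recolorClass τ v t a = recolorClass τ v t b ↔ τ' a = τ' b :=
    fun a b => (recolorClass_eq_iff ht a b).trans (hker a b)
  have hmoved : 1 ≤ ∑ w, (if τ w = τ v then 1 else 0) := by
    simpa using single_le_sum (f := fun w => if τ w = τ v then 1 else 0)
      (fun _ _ => Nat.zero_le _) (mem_univ v)
  have hlt : ∑ w, renamingBudget (recolorClass τ v t) τ' w < μ := hμ ▸ calc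
    _ < ∑ w, ((if τ w = τ v then 1 else 0) + renamingBudget (recolorClass τ v t) τ' w) := by
      rw [sum_add_distrib]
      omega
    _ ≤ _ := sum_le_sum fun w _ => hle w
  exact ((Recolorable.recolorClass hτ ht).trans
    (ih _ hlt (hτ.recolorClass ht) hker' rfl)).mono hle

/-- The Renaming Lemma. -/
theorem recolorable_of_forall_eq_iff_eq (hτ : IsProperColoring G ℓ τ)
    (hker : ∀ a b, τ a = τ b ↔ τ' a = τ' b) (hfree : Nat.card (Set.range τ') < ℓ) :
    Recolorable G ℓ (fun _ => 2) τ τ' :=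
  (recolorable_renamingBudget hτ hker hfree).mono (renamingBudget_le_two τ τ')

end Renaming

theorem stmt7_general {V : Type*} [Fintype V] (G : SimpleGraph V) (ℓ k p : ℕ)
    (hl : k < ℓ)
    (ψ : V → Fin k)
    (hyp : ∀ φ : V → Fin ℓ, IsProperColoring G ℓ φ →
      ∃ m c, IsRecolorSeq G ℓ m c ∧ c 0 = φ ∧
        (∀ a b : V, c m a = c m b ↔ ψ a = ψ b) ∧
        ∀ a : V, recolorCount m c a ≤ p) :
    ∀ φ₁ φ₂ : V → Fin ℓ, IsProperColoring G ℓ φ₁ → IsProperColoring G ℓ φ₂ →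
      ∃ m c, IsRecolorSeq G ℓ m c ∧ c 0 = φ₁ ∧ c m = φ₂ ∧
        m ≤ (2 * p + 2) * Fintype.card V := by
  classical
  intro φ₁ φ₂ hφ₁ hφ₂
  obtain ⟨m₁, c₁, hc₁, rfl, hψ₁, hp₁⟩ := hyp φ₁ hφ₁
  obtain ⟨m₂, c₂, hc₂, rfl, hψ₂, hp₂⟩ := hyp φ₂ hφ₂
  have hfree : Nat.card (Set.range (c₂ m₂)) < ℓ := by
    rw [natCard_range_eq_of_eq_iff_eq hψ₂]
    exact (Finite.card_subtype_le _).trans_lt (by simpa using hl)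
  have hrename : Recolorable G ℓ (fun _ => 2) (c₁ m₁) (c₂ m₂) :=
    recolorable_of_forall_eq_iff_eq (hc₁.1 m₁ le_rfl)
      (fun a b => (hψ₁ a b).trans (hψ₂ a b).symm) hfree
  have hwalk₁ : Recolorable G ℓ (fun _ => p) (c₁ 0) (c₁ m₁) := ⟨m₁, c₁, hc₁, rfl, rfl, hp₁⟩
  have hwalk₂ : Recolorable G ℓ (fun _ => p) (c₂ 0) (c₂ m₂) := ⟨m₂, c₂, hc₂, rfl, rfl, hp₂⟩
  obtain ⟨m, c, hc, h0, hm, hlen⟩ :=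
    ((hwalk₁.trans hrename).trans hwalk₂.symm).exists_length_le_sum
  refine ⟨m, c, hc, h0, hm, hlen.trans_eq ?_⟩
  simp only [Pi.add_apply, sum_const, card_univ, smul_eq_mul]
  ring

/-- if `ψ` is a `χ(G)`-coloring and every `ℓ`-coloring of `G` (`ℓ > χ(G)`)
can be recolored, each vertex at most `p` times, to a coloring inducing the same color
classes as `ψ`, then `R_ℓ(G)` is connected with diameter at most `(2p + 2)·n`. -/
theorem stmt7 {V : Type*} [Fintype V] (G : SimpleGraph V) (ℓ k p : ℕ)
    (hk : G.chromaticNumber = (k : ℕ∞)) (hl : k < ℓ)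
    (ψ : V → Fin k) (hψ : IsProperColoring G k ψ)
    (hyp : ∀ φ : V → Fin ℓ, IsProperColoring G ℓ φ →
      ∃ m c, IsRecolorSeq G ℓ m c ∧ c 0 = φ ∧
        (∀ a b : V, c m a = c m b ↔ ψ a = ψ b) ∧
        ∀ a : V, recolorCount m c a ≤ p) :
    ∀ φ₁ φ₂ : V → Fin ℓ, IsProperColoring G ℓ φ₁ → IsProperColoring G ℓ φ₂ →
      ∃ m c, IsRecolorSeq G ℓ m c ∧ c 0 = φ₁ ∧ c m = φ₂ ∧
        m ≤ (2 * p + 2) * Fintype.card V :=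
  stmt7_general G ℓ k p hl ψ hyp
end
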